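/- arXiv:1104.0081 — 4 statements merged into one kernel-verified Lean document; each statement's English description precedes it below -/
import Mathlib

section
/- If G is a group of order 80 = 2^4·5 with a normal Sylow 2-subgroup Q and a non-normal Sylow 5-subgroup, then Q is elementary abelian, i.e., G ≅ Z_5 ⋉ (Z_2)^4. -/
/-!
Let `P` be a Sylow `5`-subgroup, acting on `Q` by conjugation. Counting `P`-orbits, every
`P`-invariant subgroup `S ≤ Q` satisfies `|S| ≡ |C_S(P)| (mod 5)`. For `S = Q` this forces
`|C_Q(P)| ∈ {1, 16}`, and `16` would make `P` centralize `Q`, hence normal in `G = QP`.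
So `C_Q(P) = 1`, and then every nontrivial invariant subgroup, of order dividing `16` and
`≡ 1 (mod 5)`, is all of `Q`. The center of `Q` and then `{x | x² = 1}` are such subgroups,
so `Q ≅ (ℤ₂)⁴`, and `G = Q ⋊ P`.
-/

open Subgroup

theorem Sylow.card_eq_of_card_eq_pow_mul {G : Type*} [Group G] [Finite G] {p n m : ℕ}
    [hp : Fact p.Prime] (P : Sylow p G) (hG : Nat.card G = p ^ n * m) (hm : ¬ p ∣ m) :
    Nat.card P = p ^ n := by
  have hm0 : m ≠ 0 := by rintro rfl; exact hm (dvd_zero p)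
  rw [P.card_eq_multiplicity, hG, Nat.factorization_mul (pow_ne_zero _ hp.out.ne_zero) hm0,
    Finsupp.add_apply, hp.out.factorization_pow, Finsupp.single_eq_same,
    Nat.factorization_eq_zero_of_not_dvd hm, add_zero]

theorem Subgroup.eq_bot_or_eq_top_of_card_modEq_one {Q : Type*} [Group Q]
    (hQ : Nat.card Q = 16) (S : Subgroup Q) (hS : Nat.card S ≡ 1 [MOD 5]) :
    S = ⊥ ∨ S = ⊤ := by
  have : Finite Q := Nat.finite_of_card_ne_zero (by rw [hQ]; norm_num)
  have hdvd : Nat.card S ∣ 16 := hQ ▸ S.card_subgroup_dvd_card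
  have key : ∀ n < 17, n ∣ 16 → n % 5 = 1 → n = 1 ∨ n = 16 := by decide
  exact (key _ (Nat.lt_succ_of_le (Nat.le_of_dvd (by norm_num) hdvd)) hdvd hS).imp
    card_eq_one.mp fun h => eq_top_of_card_eq S (h.trans hQ.symm)

theorem Subgroup.normal_of_sup_eq_top_of_le_centralizer {G : Type*} [Group G]
    {H K : Subgroup G} (hHK : H ⊔ K = ⊤) (hH : H ≤ centralizer K) : K.Normal :=
  normalizer_eq_top_iff.mp <| top_le_iff.mp <|
    hHK ▸ sup_le (hH.trans (centralizer_le_normalizer _)) le_normalizer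

theorem nonempty_mulEquiv_of_mul_self_eq_one {Q : Type*} [Group Q] {n : ℕ}
    (hQ : Nat.card Q = 2 ^ n) (hsq : ∀ x : Q, x * x = 1) :
    Nonempty (Q ≃* Multiplicative (Fin n → ZMod 2)) := by
  let : CommGroup Q :=
    { mul_comm := Commute.of_orderOf_dvd_two fun g =>
        orderOf_dvd_of_pow_eq_one (by rw [sq, hsq]) }
  let : Module (ZMod 2) (Additive Q) :=
    AddCommGroup.zmodModule fun x => by rw [two_nsmul]; exact hsq x.toMul
  have : Finite Q := Nat.finite_of_card_ne_zero (by rw [hQ]; positivity)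
  have hrank : Module.finrank (ZMod 2) (Additive Q) = n := by
    have := Module.natCard_eq_pow_finrank (K := ZMod 2) (V := Additive Q)
    rw [Nat.card_zmod] at this
    exact Nat.pow_right_injective le_rfl (this.symm.trans hQ)
  exact ⟨AddEquiv.toMultiplicativeRight
    (Module.finBasisOfFinrankEq _ _ hrank).equivFun.toAddEquiv⟩

section Action

variable {P Q : Type*} [Group P] [Group Q] [MulDistribMulAction P Q]

theorem Subgroup.Characteristic.smul_mem {H : Subgroup Q} [hH : H.Characteristic] (g : P)
    {x : Q} (hx : x ∈ H) : g • x ∈ H :=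
  characteristic_iff_le_comap.mp hH (MulDistribMulAction.toMulEquiv Q g) hx

theorem card_subgroup_modEq_card_inf_fixedPoints {p : ℕ} [Fact p.Prime] [Finite Q]
    (hP : IsPGroup p P) (S : Subgroup Q) (hS : ∀ g : P, ∀ x ∈ S, g • x ∈ S) :
    Nat.card S ≡ Nat.card (S ⊓ FixedPoints.subgroup P Q : Subgroup Q) [MOD p] := by
  let T : SubMulAction P Q := ⟨S, fun g x hx => hS g x hx⟩
  convert hP.card_modEq_card_fixedPoints T using 1
  · rfl
  refine Nat.card_congr
    { toFun x := ⟨⟨x, (mem_inf.mp x.2).1⟩, fun g => Subtype.ext ((mem_inf.mp x.2).2 g)⟩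
      invFun x := ⟨x.1, mem_inf.mpr ⟨x.1.2, fun g => congrArg Subtype.val (x.2 g)⟩⟩ }

theorem eq_bot_or_eq_top_of_smul_mem (hP : Nat.card P = 5) (hQ : Nat.card Q = 16)
    (hfree : FixedPoints.subgroup P Q = ⊥) (S : Subgroup Q)
    (hS : ∀ g : P, ∀ x ∈ S, g • x ∈ S) : S = ⊥ ∨ S = ⊤ := by
  have : Fact (Nat.Prime 5) := ⟨Nat.prime_five⟩
  have : Finite Q := Nat.finite_of_card_ne_zero (by rw [hQ]; norm_num)
  have hmod := card_subgroup_modEq_card_inf_fixedPoints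
    (IsPGroup.of_card (hP.trans (pow_one 5).symm)) S hS
  rw [hfree, inf_bot_eq, card_bot] at hmod
  exact S.eq_bot_or_eq_top_of_card_modEq_one hQ hmod

theorem center_eq_top_of_forall_smul_mem {p : ℕ} [Fact p.Prime] [Finite Q] [Nontrivial Q]
    (hQ : IsPGroup p Q)
    (hirr : ∀ S : Subgroup Q, (∀ g : P, ∀ x ∈ S, g • x ∈ S) → S = ⊥ ∨ S = ⊤) :
    center Q = ⊤ :=
  (hirr _ fun g _ hx => Subgroup.Characteristic.smul_mem g hx).resolve_left
    ((nontrivial_iff_ne_bot _).mp hQ.center_nontrivial)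

theorem pow_eq_one_of_forall_smul_mem_of_center_eq_top
    (hirr : ∀ S : Subgroup Q, (∀ g : P, ∀ x ∈ S, g • x ∈ S) → S = ⊥ ∨ S = ⊤)
    (hcenter : center Q = ⊤) {n : ℕ} {y : Q} (hy : y ≠ 1) (hyn : y ^ n = 1) (x : Q) :
    x ^ n = 1 := by
  let := Group.commGroupOfCenterEqTop hcenter
  have hker : (powMonoidHom n : Q →* Q).ker = ⊤ := by
    refine (hirr _ fun g x hx => ?_).resolve_left fun h => hy ?_
    · rw [MonoidHom.mem_ker, powMonoidHom_apply] at hx ⊢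
      rw [← smul_pow', hx, smul_one]
    · rw [← mem_bot, ← h]
      exact hyn
  have hx : x ∈ (powMonoidHom n : Q →* Q).ker := hker ▸ mem_top x
  exact hx

theorem IsPGroup.pow_eq_one_of_forall_smul_mem {p : ℕ} [Fact p.Prime] [Finite Q]
    [Nontrivial Q] (hQ : IsPGroup p Q)
    (hirr : ∀ S : Subgroup Q, (∀ g : P, ∀ x ∈ S, g • x ∈ S) → S = ⊥ ∨ S = ⊤)
    (x : Q) : x ^ p = 1 := by
  obtain ⟨y, hy⟩ := exists_prime_orderOf_dvd_card' p
    (hQ.card_eq_or_dvd.resolve_left Finite.one_lt_card.ne')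
  have hy1 : y ≠ 1 := by
    rintro rfl
    exact (Fact.out : p.Prime).one_lt.ne (orderOf_one.symm.trans hy)
  exact pow_eq_one_of_forall_smul_mem_of_center_eq_top hirr
    (center_eq_top_of_forall_smul_mem hQ hirr) hy1 (hy ▸ pow_orderOf_eq_one y) x

end Action

section Conjugation

variable {G : Type*} [Group G] (P Q : Subgroup G) [Q.Normal]

abbrev Subgroup.conjMulDistribMulAction : MulDistribMulAction P Q :=
  MulDistribMulAction.compHom Q ((MulAut.conjNormal (H := Q)).comp P.subtype)

attribute [local instance] Subgroup.conjMulDistribMulAction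

theorem le_centralizer_of_fixedPoints_eq_top (h : FixedPoints.subgroup P Q = ⊤) :
    Q ≤ centralizer P := by
  intro x hx g hg
  have hfix : g * x * g⁻¹ = x := congrArg Subtype.val
    ((FixedPoints.mem_subgroup P Q ⟨x, hx⟩).mp (h ▸ mem_top _) ⟨g, hg⟩)
  rwa [mul_inv_eq_iff_eq_mul] at hfix

theorem fixedPoints_eq_bot_of_not_normal (hQ : Nat.card Q = 16) (hP : Nat.card P = 5)
    (hcompl : IsComplement' Q P) (hPn : ¬ P.Normal) : FixedPoints.subgroup P Q = ⊥ := by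
  have : Fact (Nat.Prime 5) := ⟨Nat.prime_five⟩
  have : Finite Q := Nat.finite_of_card_ne_zero (by rw [hQ]; norm_num)
  have hmod := card_subgroup_modEq_card_inf_fixedPoints (Q := Q)
    (IsPGroup.of_card (hP.trans (pow_one 5).symm)) ⊤ fun _ _ _ => mem_top _
  rw [top_inf_eq, card_top, hQ] at hmod
  rcases (FixedPoints.subgroup P Q).eq_bot_or_eq_top_of_card_modEq_one hQ hmod.symm with
    hbot | htop
  · exact hbot
  · exact absurd (normal_of_sup_eq_top_of_le_centralizer hcompl.sup_eq_top
      (le_centralizer_of_fixedPoints_eq_top P Q htop)) hPn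

end Conjugation

/-- If `G` is a group of order `80 = 2⁴·5` with a normal Sylow `2`-subgroup `Q` and a
non-normal Sylow `5`-subgroup, then `Q` is elementary abelian, i.e. `G ≅ ℤ₅ ⋉ (ℤ₂)⁴`. -/
theorem stmt9 (G : Type) [Group G] [Fintype G] (hcard : Fintype.card G = 80)
    (Q : Sylow 2 G) (hQ : (Q : Subgroup G).Normal)
    (hP : ∀ P : Sylow 5 G, ¬ (P : Subgroup G).Normal) :
    (∀ q : (Q : Subgroup G), q * q = 1) ∧
    ∃ φ : Multiplicative (ZMod 5) →* MulAut (Multiplicative (Fin 4 → ZMod 2)),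
      Nonempty (G ≃* Multiplicative (Fin 4 → ZMod 2) ⋊[φ] Multiplicative (ZMod 5)) := by
  have : Fact (Nat.Prime 5) := ⟨Nat.prime_five⟩
  obtain ⟨P⟩ : Nonempty (Sylow 5 G) := inferInstance
  have hG : Nat.card G = 80 := by rw [Nat.card_eq_fintype_card, hcard]
  have hQcard : Nat.card Q = 2 ^ 4 :=
    Q.card_eq_of_card_eq_pow_mul (hG.trans (by norm_num)) (m := 5) (by norm_num)
  have hPcard : Nat.card P = 5 := by
    simpa using P.card_eq_of_card_eq_pow_mul (hG.trans (by norm_num)) (n := 1) (m := 16)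
      (by norm_num)
  have hcompl : IsComplement' (Q : Subgroup G) P :=
    isComplement'_of_coprime (by rw [hQcard, hPcard, hG]; norm_num)
      (by rw [hQcard, hPcard]; norm_num)
  have : Nontrivial (Q : Subgroup G) :=
    Finite.one_lt_card_iff_nontrivial.mp (by rw [hQcard]; norm_num)
  let := Subgroup.conjMulDistribMulAction (P : Subgroup G) Q
  have hirr := eq_bot_or_eq_top_of_smul_mem hPcard hQcard
    (fixedPoints_eq_bot_of_not_normal _ _ hQcard hPcard hcompl (hP P))
  have hsq (q : (Q : Subgroup G)) : q * q = 1 := by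
    rw [← sq]
    exact Q.isPGroup'.pow_eq_one_of_forall_smul_mem hirr q
  obtain ⟨eQ⟩ := nonempty_mulEquiv_of_mul_self_eq_one hQcard hsq
  exact ⟨hsq, _, ⟨(SemidirectProduct.mulEquivSubgroup hcompl).symm.trans
    (SemidirectProduct.congr' eQ (mulEquivOfPrimeCardEq hPcard (by simp)))⟩⟩
end

section
/- Let G be a finite group with cyclic commutator subgroup G'. If G = ⟨a, b⟩ is generated by two elements, then G' = ⟨[a,b]⟩, the cyclic subgroup generated by the commutator a^{-1}b^{-1}ab. -/
/-!
Write `c = a⁻¹b⁻¹ab`. Conjugation by any `g` restricts to an automorphism of the cyclic normal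
subgroup `G'`, and every endomorphism of a cyclic group is a power map; hence `g c g⁻¹` is a power
of `c` and `⟨c⟩` is normal in `G`. Modulo `⟨c⟩` the generators `a` and `b` commute, so the quotient
is abelian and `G' ≤ ⟨c⟩`.
-/

open Subgroup
open scoped commutatorElement

theorem IsCyclic.exists_zpow_eq_of_monoidHom {K : Type*} [Group K] [IsCyclic K] (f : K →* K) :
    ∃ k : ℤ, ∀ x, f x = x ^ k := by
  obtain ⟨g, hg⟩ := IsCyclic.exists_generator (α := K)
  obtain ⟨k, hk⟩ := mem_zpowers_iff.mp (hg (f g))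
  refine ⟨k, fun x => ?_⟩
  obtain ⟨n, rfl⟩ := mem_zpowers_iff.mp (hg x)
  rw [map_zpow, ← hk, ← zpow_mul, ← zpow_mul, mul_comm]

theorem Subgroup.zpowers_normal_of_mem_of_isCyclic {G : Type*} [Group G] {N : Subgroup G}
    [N.Normal] (hN : IsCyclic N) {c : G} (hc : c ∈ N) : (zpowers c).Normal := by
  constructor
  rintro _ ⟨m, rfl⟩ g
  obtain ⟨k, hk⟩ := IsCyclic.exists_zpow_eq_of_monoidHom (MulAut.conjNormal g : N ≃* N).toMonoidHom
  have hconj : g * c * g⁻¹ = c ^ k := by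
    simpa [MulAut.conjNormal_apply] using congrArg Subtype.val (hk ⟨c, hc⟩)
  refine ⟨k * m, show c ^ (k * m) = g * c ^ m * g⁻¹ from ?_⟩
  rw [zpow_mul, ← hconj, conj_zpow]

theorem isMulCommutative_of_closure_eq_top {Q : Type*} [Group Q] {s : Set Q}
    (hs : closure s = ⊤) (hcomm : ∀ x ∈ s, ∀ y ∈ s, x * y = y * x) : IsMulCommutative Q := by
  have := isMulCommutative_closure hcomm
  rw [hs] at this
  exact Function.Surjective.mul_comm (f := (topEquiv : (⊤ : Subgroup Q) ≃* Q).toMonoidHom)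
    topEquiv.surjective this

theorem commutator_le_of_closure_pair_eq_top {G : Type*} [Group G] {N : Subgroup G} [N.Normal]
    {a b : G} (hgen : closure {a, b} = ⊤) (hab : ⁅a, b⁆ ∈ N) : commutator G ≤ N := by
  rw [← Normal.quotient_commutative_iff_commutator_le]
  let π := QuotientGroup.mk' N
  have hgenQ : closure {π a, π b} = ⊤ := by
    rw [← Set.image_pair, ← MonoidHom.map_closure, hgen, ← MonoidHom.range_eq_map,
      MonoidHom.range_eq_top.mpr (QuotientGroup.mk'_surjective N)]
  have hcommQ : π a * π b = π b * π a := by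
    rw [← commutatorElement_eq_one_iff_mul_comm, ← map_commutatorElement,
      QuotientGroup.mk'_apply, QuotientGroup.eq_one_iff]
    exact hab
  refine isMulCommutative_of_closure_eq_top hgenQ ?_
  rintro x (rfl | rfl) y (rfl | rfl)
  exacts [rfl, hcommQ, hcommQ.symm, rfl]

theorem stmt11_general (G : Type) [Group G] (hcyc : IsCyclic (commutator G))
    (a b : G) (hgen : Subgroup.closure {a, b} = ⊤) :
    commutator G = Subgroup.zpowers (a⁻¹ * b⁻¹ * a * b) := by
  have hc : a⁻¹ * b⁻¹ * a * b = ⁅a⁻¹, b⁻¹⁆ := by group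
  have hgen' : closure {a⁻¹, b⁻¹} = ⊤ := by
    rw [← Set.inv_singleton, ← Set.inv_insert, closure_inv, hgen]
  have hmem : ⁅a⁻¹, b⁻¹⁆ ∈ commutator G := commutator_mem_commutator (mem_top _) (mem_top _)
  have := zpowers_normal_of_mem_of_isCyclic hcyc hmem
  rw [hc]
  exact le_antisymm (commutator_le_of_closure_pair_eq_top hgen' (mem_zpowers _))
    (zpowers_le.mpr hmem)

/-- Let `G` be a finite group with cyclic commutator subgroup `G'`. If `G = ⟨a, b⟩` is
generated by two elements, then `G' = ⟨[a,b]⟩`, the cyclic subgroup generated by the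
commutator `a⁻¹b⁻¹ab`. -/
theorem stmt11 (G : Type) [Group G] [Finite G] (hcyc : IsCyclic (commutator G))
    (a b : G) (hgen : Subgroup.closure {a, b} = ⊤) :
    commutator G = Subgroup.zpowers (a⁻¹ * b⁻¹ * a * b) :=
  stmt11_general G hcyc a b hgen
end

section
/- Let G be a group of order 16p as above with G' = Q'·P. Then Q' is normal in G and Q' is contained in the Frattini subgroup Φ(G). -/
/-!
Since `P` is cyclic, `Aut P` is abelian, so `G'` centralizes `P`, and so does `Q' ≤ G'`. As `Q`
normalizes `Q'` and `G = QP`, the subgroup `Q'` is normal. Now let `M` be a maximal subgroup.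
If `P ≤ M`, then `M` is normal because `G/P` is a `2`-group, hence nilpotent, so
`Q' ≤ G' ≤ M`. Otherwise `M ∩ P = 1` and `MP = G`, so `|M| = 16`: then `M` is a Sylow
`2`-subgroup and contains the normal `2`-subgroup `Q'`.
-/

namespace Subgroup

variable {G : Type*} [Group G]

theorem index_eq_of_card_eq_mul [Finite G] {H : Subgroup G} {n : ℕ}
    (h : Nat.card G = Nat.card H * n) : H.index = n :=
  Nat.eq_of_mul_eq_mul_left Nat.card_pos (H.card_mul_index.trans h)

theorem sup_eq_top_of_coprime_index {H K : Subgroup G} (h : H.index.Coprime K.index) :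
    H ⊔ K = ⊤ :=
  index_eq_one.mp <| Nat.eq_one_of_dvd_coprimes h (index_dvd_of_le le_sup_left)
    (index_dvd_of_le le_sup_right)

theorem commutator_le_centralizer_of_isCyclic (N : Subgroup G) [N.Normal] [IsCyclic N] :
    _root_.commutator G ≤ centralizer (N : Set G) := by
  intro g hg
  have hconj : MulAut.conjNormal g = (1 : MulAut N) := by
    simpa using Abelianization.commutator_subset_ker
      ((IsCyclic.mulAutMulEquiv N).toMonoidHom.comp MulAut.conjNormal) hg
  rw [mem_centralizer_iff]
  intro n hn
  have hgn := congrArg (fun f : MulAut N => (f ⟨n, hn⟩ : G)) hconj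
  simp only [MulAut.conjNormal_apply, MulAut.one_apply] at hgn
  exact (mul_inv_eq_iff_eq_mul.mp hgn).symm

theorem le_normalizer_map_subtype_commutator (H : Subgroup G) :
    H ≤ normalizer (map H.subtype (_root_.commutator H) : Set G) := by
  have : ((map H.subtype (_root_.commutator H)).subgroupOf H).Normal := by
    rw [subgroupOf, comap_map_eq_self_of_injective H.subtype_injective]
    infer_instance
  exact le_normalizer_of_normal_subgroupOf (map_subtype_le _)

theorem normal_of_le_normalizer_of_le_centralizer {K H N : Subgroup G}
    (hH : H ≤ normalizer (K : Set G)) (hN : K ≤ centralizer (N : Set G)) (hHN : H ⊔ N = ⊤) :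
    K.Normal := by
  rw [← normalizer_eq_top_iff, ← top_le_iff, ← hHN]
  exact sup_le hH ((le_centralizer_iff.mp hN).trans (centralizer_le_normalizer _))

theorem commutator_le_of_isCoatom {M : Subgroup G} [M.Normal] (hM : IsCoatom M) :
    _root_.commutator G ≤ M := by
  obtain ⟨g, hg⟩ : ∃ g, g ∉ M := by
    by_contra! h
    exact hM.1 (eq_top_iff.mpr fun g _ => h g)
  have hgen : M ⊔ zpowers g = ⊤ :=
    hM.2 _ (left_lt_sup.mpr fun h => hg (h (mem_zpowers g)))
  have : IsCyclic (G ⧸ M) := by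
    refine isCyclic_iff_exists_zpowers_eq_top.mpr ⟨g, ?_⟩
    rw [← map_top_of_surjective _ (QuotientGroup.mk'_surjective M), ← hgen, map_sup,
      QuotientGroup.map_mk'_self, bot_sup_eq, MonoidHom.map_zpowers]
    rfl
  exact Normal.quotient_commutative_iff_commutator_le.mp inferInstance

theorem normal_of_isCoatom_of_le {N M : Subgroup G} [N.Normal] [Group.IsNilpotent (G ⧸ N)]
    (hM : IsCoatom M) (hNM : N ≤ M) : M.Normal := by
  set π := QuotientGroup.mk' N
  have hM' : comap π (map π M) = M := comap_map_eq_self (by rwa [QuotientGroup.ker_mk'])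
  have hne : map π M ≠ ⊤ := fun h => hM.1 (by rw [← hM', h, comap_top])
  have hlt := Group.normalizerCondition_of_isNilpotent _ (lt_top_iff_ne_top.mpr hne)
  rw [← comap_lt_comap_of_surjective (QuotientGroup.mk'_surjective N), hM'] at hlt
  refine normalizer_eq_top_iff.mp (hM.2 _ (hlt.trans_le ?_))
  conv_rhs => rw [← hM']
  exact le_normalizer_comap π

theorem card_eq_index_of_isCoatom_of_not_le {N M : Subgroup G} [N.Normal]
    (hN : (Nat.card N).Prime) (hM : IsCoatom M) (hNM : ¬ N ≤ M) : Nat.card M = N.index := by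
  have : Fact (Nat.card N).Prime := ⟨hN⟩
  have hdisj : N.subgroupOf M = ⊥ := by
    rw [subgroupOf_eq_bot, disjoint_comm, ← subgroupOf_eq_bot]
    refine (eq_bot_or_eq_top_of_prime_card (M.subgroupOf N)).resolve_right fun h => hNM ?_
    rwa [subgroupOf_eq_top] at h
  rw [← index_bot (G := M), ← hdisj, ← relIndex, ← relIndex_sup_right,
    hM.2 _ (left_lt_sup.mpr hNM), relIndex_top_right]

theorem le_frattini_of_forall_isCoatom {K : Subgroup G} (h : ∀ M, IsCoatom M → K ≤ M) :
    K ≤ frattini G :=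
  le_iInf₂ h

end Subgroup

theorem Sylow.card_eq_of_card_eq_mul {G : Type*} [Group G] [Finite G] {p m : ℕ} [Fact p.Prime]
    (P : Sylow p G) (hpm : ¬ p ∣ m) (h : Nat.card G = m * p) : Nat.card P = p := by
  have hm : m ≠ 0 := by rintro rfl; exact hpm (dvd_zero p)
  rw [P.card_eq_multiplicity, h, Nat.factorization_mul hm (NeZero.ne p), Finsupp.add_apply,
    Nat.factorization_eq_zero_of_not_dvd hpm, Nat.Prime.factorization_self Fact.out,
    zero_add, pow_one]

/-- Let `G` be a group of order `16p` (`p` an odd prime) with normal Sylow `p`-subgroup `P`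
and Sylow `2`-subgroup `Q`, such that `G' = Q'·P`. Then `Q'` (viewed inside `G`) is normal
in `G` and is contained in the Frattini subgroup `Φ(G)`. -/
theorem stmt13 (G : Type) [Group G] [Fintype G] (p : ℕ) [Fact p.Prime] (hp : p ≠ 2)
    (hcard : Fintype.card G = 16 * p)
    (P : Sylow p G) (hP : (P : Subgroup G).Normal) (Q : Sylow 2 G)
    (hG' : commutator G =
      Subgroup.map (Q : Subgroup G).subtype (commutator ↥(Q : Subgroup G)) ⊔ (P : Subgroup G)) :
    (Subgroup.map (Q : Subgroup G).subtype (commutator ↥(Q : Subgroup G))).Normal ∧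
    Subgroup.map (Q : Subgroup G).subtype (commutator ↥(Q : Subgroup G)) ≤ frattini G := by
  have hpp : p.Prime := Fact.out
  have hp2 : ¬ 2 ∣ p := fun h => hp ((Nat.prime_dvd_prime_iff_eq Nat.prime_two hpp).mp h).symm
  have hp16 : ¬ p ∣ 2 ^ 4 := fun h =>
    hp ((Nat.prime_dvd_prime_iff_eq hpp Nat.prime_two).mp (hpp.dvd_of_dvd_pow h))
  have hcardG : Nat.card G = 2 ^ 4 * p := by rw [Nat.card_eq_fintype_card, hcard]; rfl
  have hcardP : Nat.card P = p := P.card_eq_of_card_eq_mul hp16 hcardG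
  have hPindex : (P : Subgroup G).index = 2 ^ 4 :=
    Subgroup.index_eq_of_card_eq_mul (by rw [hcardP, hcardG, mul_comm])
  have : IsCyclic P := isCyclic_of_prime_card hcardP
  set K := Subgroup.map (Q : Subgroup G).subtype (commutator Q)
  have hKG' : K ≤ commutator G := by rw [hG']; exact le_sup_left
  have hQP : (Q : Subgroup G) ⊔ P = ⊤ := Subgroup.sup_eq_top_of_coprime_index <| by
    rw [hPindex]
    exact ((Nat.Prime.coprime_iff_not_dvd Nat.prime_two).mpr Q.not_dvd_index).symm.pow_right 4
  have hK : K.Normal := Subgroup.normal_of_le_normalizer_of_le_centralizer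
    (Subgroup.le_normalizer_map_subtype_commutator (Q : Subgroup G))
    (hKG'.trans (Subgroup.commutator_le_centralizer_of_isCyclic (P : Subgroup G))) hQP
  refine ⟨hK, Subgroup.le_frattini_of_forall_isCoatom fun M hM => ?_⟩
  by_cases hPM : (P : Subgroup G) ≤ M
  · have : Group.IsNilpotent (G ⧸ (P : Subgroup G)) :=
      (IsPGroup.of_card (by rw [← Subgroup.index_eq_card, hPindex])).isNilpotent
    have := Subgroup.normal_of_isCoatom_of_le hM hPM
    exact hKG'.trans (Subgroup.commutator_le_of_isCoatom hM)
  · have hcardM : Nat.card M = 2 ^ 4 :=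
      (Subgroup.card_eq_index_of_isCoatom_of_not_le (hcardP.symm ▸ hpp) hM hPM).trans hPindex
    have hMindex : M.index = p := Subgroup.index_eq_of_card_eq_mul (by rw [hcardM, hcardG])
    have hK2 : IsPGroup 2 K := Q.isPGroup'.to_le (Subgroup.map_subtype_le _)
    exact hK2.le_sylow_of_normal ((IsPGroup.of_card hcardM).toSylow (hMindex ▸ hp2))
end

section
/- Let G be a finite group, S a generating set, X ⊆ S such that ⟨X⟩ is abelian and nontrivial, and every g ∈ G either centralizes or inverts every element of ⟨X⟩. If Cay(⟨X⟩; X) has a hamiltonian cycle and Cay(G/⟨X⟩; S) has a hamiltonian path, then the map f(i,j) = x_i g_j (where x_0,...,x_{m-1} traverses the hamiltonian cycle and g_0,...,g_n lifts the hamiltonian path) embeds the Cartesian product of a cycle C_m and a path P_{n+1} as a spanning subgraph of Cay(G; S); consequently Cay(G; S) has a hamiltonian cycle. -/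
open SimpleGraph

/-- The Cayley graph `Cay(G; S)`: vertex set `G`, with `g` adjacent to `h` when
`g⁻¹h ∈ S ∪ S⁻¹`. -/
def cayleyGraph (G : Type) [Group G] (S : Set G) : SimpleGraph G where
  Adj g h := g ≠ h ∧ (g⁻¹ * h ∈ S ∨ (g⁻¹ * h)⁻¹ ∈ S)
  symm := by
    constructor
    rintro g h ⟨hne, hs⟩
    refine ⟨hne.symm, ?_⟩
    have : h⁻¹ * g = (g⁻¹ * h)⁻¹ := by group
    rw [this, inv_inv]
    tauto
  loopless := by constructor; rintro g ⟨hne, -⟩; exact hne rfl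

/-- A list `L = (s₁, …, sₘ)` of elements of `S ∪ S⁻¹` is a hamiltonian cycle in the Cayley
graph `Cay(G; S)` if the partial products `e, s₁, s₁s₂, …, s₁⋯sₘ₋₁` visit every element of
`G` exactly once, and the full product `s₁⋯sₘ` returns to the identity. -/
def IsHamCycle {G : Type} [Group G] (S : Set G) (L : List G) : Prop :=
  L ≠ [] ∧ (∀ s ∈ L, s ∈ S ∨ s⁻¹ ∈ S) ∧ L.length = Nat.card G ∧
    (((List.range L.length).map fun k => (L.take k).prod).Nodup) ∧ L.prod = 1

/-- A list `L = (s₁, …, sₘ)` of elements of `S ∪ S⁻¹` is a hamiltonian path in the Cayley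
graph `Cay(G; S)` if the partial products `e, s₁, s₁s₂, …, s₁⋯sₘ` visit every element of `G`
exactly once. -/
def IsHamPath {G : Type} [Group G] (S : Set G) (L : List G) : Prop :=
  (∀ s ∈ L, s ∈ S ∨ s⁻¹ ∈ S) ∧ L.length + 1 = Nat.card G ∧
    (((List.range (L.length + 1)).map fun k => (L.take k).prod).Nodup)

/-!
Let `x₀, …, x_{m-1}` be the vertices of the hamiltonian cycle of `Cay(⟨X⟩; X)` and let
`g₀, …, gₙ ∈ G` be the partial products of a lift to `S ∪ S⁻¹` of the steps of the hamiltonian path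
of `G/⟨X⟩`. The map `(i, j) ↦ xᵢ gⱼ` is injective because the `gⱼ` lie in distinct cosets of
`⟨X⟩`, hence bijective since `|G| = m (n + 1)`. Moving along the path multiplies `xᵢ gⱼ` on the
right by a generator, and moving along the cycle multiplies it on the right by `gⱼ⁻¹ x gⱼ` with
`x ∈ X ∪ X⁻¹`; since `gⱼ` centralizes or inverts `⟨X⟩` this is again in `S ∪ S⁻¹`. So `Cₘ □ Pₙ₊₁`
embeds as a spanning subgraph of `Cay(G; S)`, and a hamiltonian cycle of `Cₘ □ Pₙ₊₁` (which
exists as `m ≥ 2`) is carried to one of `Cay(G; S)`.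
-/

variable {V W : Type*}

theorem List.isChain_cons_reverse_append {α : Type*} {R : α → α → Prop}
    (hR : ∀ ⦃a b⦄, R a b → R b a) {c : α} {t : List α} (h : (c :: t ++ [c]).IsChain R) :
    (c :: t.reverse ++ [c]).IsChain R := by
  have : c :: t.reverse ++ [c] = (c :: t ++ [c]).reverse := by simp
  rw [this, List.isChain_reverse]
  exact h.imp fun _ _ hab => hR hab

theorem List.Nodup.injective_fin_of_map_range {β : Type*} {f : ℕ → β} {n : ℕ}
    (h : ((List.range n).map f).Nodup) : Function.Injective fun i : Fin n => f i :=
  fun i j hij =>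
    Fin.ext (List.inj_on_of_nodup_map h (List.mem_range.2 i.2) (List.mem_range.2 j.2) hij)

/-- Unlike `SimpleGraph.Walk.IsHamiltonianCycle`, this admits cycles of length two, as does
`IsHamCycle`. -/
structure SimpleGraph.IsHamCycleList (H : SimpleGraph V) (l : List V) : Prop where
  nodup : l.Nodup
  mem : ∀ v, v ∈ l
  isChain : (l ++ l.take 1).IsChain H.Adj

namespace SimpleGraph

theorem isHamCycleList_nil [IsEmpty V] (H : SimpleGraph V) : H.IsHamCycleList [] :=
  ⟨List.nodup_nil, isEmptyElim, List.IsChain.nil⟩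

theorem IsHamCycleList.length_eq_natCard {H : SimpleGraph V} {l : List V}
    (h : H.IsHamCycleList l) : l.length = Nat.card V := by
  classical
  rw [← Nat.card_congr (h.nodup.getEquivOfForallMemList l h.mem), Nat.card_eq_fintype_card,
    Fintype.card_fin]

theorem IsHamCycleList.map {G : SimpleGraph V} {G' : SimpleGraph W} {l : List V}
    (h : G.IsHamCycleList l) (φ : G →g G') (hφ : Function.Bijective φ) :
    G'.IsHamCycleList (l.map φ) := by
  refine ⟨h.nodup.map hφ.1, fun w => ?_, ?_⟩
  · obtain ⟨v, rfl⟩ := hφ.2 w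
    exact List.mem_map_of_mem (h.mem v)
  · rw [← List.map_take, ← List.map_append, List.isChain_map]
    exact h.isChain.imp fun _ _ => φ.map_adj

theorem isChain_finRange_pathGraph (n : ℕ) : (List.finRange n).IsChain (pathGraph n).Adj := by
  rw [List.isChain_iff_getElem]
  intro i hi
  simp [pathGraph_adj]

theorem isHamCycleList_finRange_cycleGraph {m : ℕ} (hm : 2 ≤ m) :
    (cycleGraph m).IsHamCycleList (List.finRange m) := by
  obtain ⟨k, rfl⟩ : ∃ k, m = k + 1 := ⟨m - 1, by omega⟩
  refine ⟨List.nodup_finRange _, List.mem_finRange, ?_⟩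
  have h0 : (List.finRange (k + 1)).take 1 = [0] := by simp [List.finRange_succ]
  have hlast : (List.finRange (k + 1)).getLast? = some (Fin.last k) := by
    simp [List.finRange_succ_last]
  rw [h0, List.isChain_append]
  refine ⟨(isChain_finRange_pathGraph _).imp fun _ _ h => pathGraph_le_cycleGraph h,
    List.isChain_singleton _, ?_⟩
  simp only [hlast, Option.mem_def, Option.some.injEq, List.head?_cons, forall_eq']
  have hk : 0 < Fin.last k := by simp [Fin.lt_def]; omega
  rw [cycleGraph_adj', Fin.coe_sub_iff_lt.mpr hk]
  simp

theorem val_eq_succ_mod_of_cycleGraph_adj {n : ℕ} {i j : Fin n} (h : (cycleGraph n).Adj i j) :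
    j.val = (i.val + 1) % n ∨ i.val = (j.val + 1) % n := by
  have key : ∀ a b : Fin n, (b - a).val = 1 → b.val = (a.val + 1) % n := by
    intro a b hab
    rcases le_or_gt a b with hle | hlt
    · rw [Fin.sub_val_of_le hle] at hab
      rw [Nat.mod_eq_of_lt (by omega)]
      omega
    · rw [Fin.coe_sub_iff_lt.mpr hlt] at hab
      rw [show a.val + 1 = n by omega, Nat.mod_self]
      omega
  exact (cycleGraph_adj'.mp h).symm.imp (key i j) (key j i)

/-- For `v :: w :: p`, the induction hypothesis for the reversed cycle `c :: t.reverse` gives a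
path through the levels `w :: p` from `(c, w)` to `(a, w)`, where `a` is the head of `t`. It is
preceded by `(c, v)` and followed by the level `v` traversed along `t`, so it ends over the last
vertex of `c :: t`. Reversing the cycle from one level to the next is what lets the levels join
up. -/
theorem exists_isChain_boxProd {G : SimpleGraph V} {H : SimpleGraph W} (c : V) (t : List V)
    (ht : (c :: t).Nodup) (hc : (c :: t ++ [c]).IsChain G.Adj) (v : W) (p : List W)
    (hp : (v :: p).Nodup) (hpH : (v :: p).IsChain H.Adj) :
    ∃ l : List (V × W), l.Nodup ∧ (∀ x, x ∈ l ↔ x.1 ∈ c :: t ∧ x.2 ∈ v :: p) ∧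
      l.IsChain (G □ H).Adj ∧ l.head? = some (c, v) ∧
      l.getLast? = (c :: t).getLast?.map (·, v) := by
  induction p generalizing v t with
  | nil =>
    refine ⟨(c :: t).map (·, v), ht.map fun _ _ h => (Prod.mk.inj h).1, ?_, ?_, rfl,
      List.getLast?_map ..⟩
    · simp only [List.mem_map, List.mem_cons, Prod.forall, Prod.mk.injEq]
      aesop
    · rw [List.isChain_map]
      exact (hc.infix (List.prefix_append _ _).isInfix).imp fun _ _ => boxProd_adj_left.mpr
  | cons w p ih =>
    obtain ⟨a, s, rfl⟩ : ∃ a s, t = a :: s := by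
      refine List.exists_cons_of_ne_nil ?_
      rintro rfl
      exact G.irrefl (List.isChain_cons_cons.mp hc).1
    obtain ⟨hvw, hpH⟩ := List.isChain_cons_cons.mp hpH
    obtain ⟨l, hnd, hmem, hch, hhead, hlast⟩ := ih (a :: s).reverse
      (((a :: s).reverse_perm.cons c).nodup_iff.mpr ht)
      (List.isChain_cons_reverse_append (fun _ _ h => h.symm) hc) w hp.of_cons hpH
    refine ⟨(c, v) :: (l ++ (a :: s).map (·, v)), ?_, ?_, ?_, rfl, ?_⟩
    · have hv := (List.nodup_cons.mp hp).1
      have hca := (List.nodup_cons.mp ht).1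
      simp only [List.nodup_cons, List.nodup_append, List.mem_append, List.mem_map, hmem]
      refine ⟨?_, hnd, ht.of_cons.map fun _ _ h => (Prod.mk.inj h).1, ?_⟩ <;> aesop
    · intro x
      simp only [List.mem_cons, List.mem_append, List.mem_map, hmem, List.mem_reverse]
      aesop
    · have hl : l ≠ [] := by rintro rfl; simp at hhead
      rw [List.isChain_cons, List.head?_append_of_ne_nil _ hl, hhead, List.isChain_append,
        List.isChain_map]
      refine ⟨by simpa using hvw, hch,
        (hc.infix ⟨[c], [c], rfl⟩).imp fun _ _ => boxProd_adj_left.mpr, ?_⟩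
      simp only [hlast, List.getLast?_cons, List.reverse_cons]
      simpa using hvw.symm
    · simp [List.getLast?_cons, List.getLast?_append, List.getLast?_map]

theorem IsHamCycleList.exists_boxProd {G : SimpleGraph V} {H : SimpleGraph W} {c : List V}
    {p : List W} (hc : G.IsHamCycleList c) (hp : p.Nodup) (hpH : ∀ w, w ∈ p)
    (hpc : p.IsChain H.Adj) : ∃ l, (G □ H).IsHamCycleList l := by
  rcases c with _ | ⟨c, t⟩
  · have : IsEmpty V := ⟨fun v => List.not_mem_nil (hc.mem v)⟩
    exact ⟨[], isHamCycleList_nil _⟩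
  rcases p with _ | ⟨v, p⟩
  · have : IsEmpty W := ⟨fun w => List.not_mem_nil (hpH w)⟩
    exact ⟨[], isHamCycleList_nil _⟩
  have hch : (c :: t ++ [c]).IsChain G.Adj := by simpa using hc.isChain
  obtain ⟨l, hlnd, hlmem, hlch, hhead, hlast⟩ := exists_isChain_boxProd c t hc.nodup hch v p hp hpc
  refine ⟨l, hlnd, fun x => (hlmem x).mpr ⟨hc.mem _, hpH _⟩, ?_⟩
  rw [List.take_one, hhead, Option.toList_some, List.isChain_append]
  refine ⟨hlch, List.isChain_singleton _, ?_⟩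
  simp only [hlast, Option.mem_map, List.head?_cons, Option.mem_some_iff]
  rintro _ ⟨x, hx, rfl⟩ _ rfl
  exact boxProd_adj_left.mpr ((List.isChain_append.mp hch).2.2 x hx c rfl)

end SimpleGraph

section Steps

variable {G : Type*} [Group G]

def List.stepsFrom (a : G) : List G → List G
  | [] => []
  | b :: l => (a⁻¹ * b) :: stepsFrom b l

theorem List.length_stepsFrom (a : G) (l : List G) : (stepsFrom a l).length = l.length := by
  induction l generalizing a <;> simp [stepsFrom, *]

theorem List.prod_stepsFrom_concat (a b : G) (l : List G) :
    (stepsFrom a (l ++ [b])).prod = a⁻¹ * b := by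
  induction l generalizing a <;> simp [stepsFrom, mul_assoc, *]

theorem List.map_range_prod_take_stepsFrom (a : G) (l : List G) :
    (range l.length).map (fun k => ((stepsFrom a l).take k).prod) =
      (a :: l).dropLast.map (a⁻¹ * ·) := by
  induction l generalizing a with
  | nil => simp
  | cons b l ih =>
    have hshift : (a⁻¹ * ·) = ((a⁻¹ * b) * ·) ∘ (b⁻¹ * ·) := by ext; simp [mul_assoc]
    simp only [length_cons, range_succ_eq_map, map_cons, map_map, dropLast_cons_cons, stepsFrom,
      take_zero, prod_nil, inv_mul_cancel, take_succ_cons, prod_cons, Function.comp_def]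
    rw [hshift, ← map_map, ← ih b, map_map]
    rfl

theorem List.mem_stepsFrom {S : Set G} {a : G} {l : List G}
    (h : (a :: l).IsChain (fun g h => g⁻¹ * h ∈ S ∨ (g⁻¹ * h)⁻¹ ∈ S)) :
    ∀ s ∈ stepsFrom a l, s ∈ S ∨ s⁻¹ ∈ S := by
  induction l generalizing a with
  | nil => simp [stepsFrom]
  | cons b l ih =>
    obtain ⟨hab, h⟩ := isChain_cons_cons.mp h
    exact forall_mem_cons.mpr ⟨hab, ih h⟩

theorem List.prod_take_succ_mod {L : List G} (hL : L.prod = 1) {i : ℕ} (hi : i < L.length) :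
    (L.take ((i + 1) % L.length)).prod = (L.take i).prod * L[i] := by
  rcases Nat.lt_or_ge (i + 1) L.length with h | h
  · rw [Nat.mod_eq_of_lt h, List.prod_take_succ]
  · have h : i + 1 = L.length := by omega
    rw [h, Nat.mod_self, List.take_zero, List.prod_nil, ← List.prod_take_succ _ _ hi, h,
      List.take_length, hL]

end Steps

section Cayley

variable {G K : Type} [Group G] [Group K]

theorem exists_isHamCycle_of_isHamCycleList {S : Set G} {l : List G}
    (h : (cayleyGraph G S).IsHamCycleList l) : ∃ L, IsHamCycle S L := by
  obtain ⟨a, t, rfl⟩ := List.exists_cons_of_ne_nil (List.ne_nil_of_mem (h.mem 1))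
  have hch : (a :: (t ++ [a])).IsChain (cayleyGraph G S).Adj := by simpa using h.isChain
  refine ⟨List.stepsFrom a (t ++ [a]), ?_, List.mem_stepsFrom (hch.imp fun _ _ hgh => hgh.2),
    ?_, ?_, by rw [List.prod_stepsFrom_concat, inv_mul_cancel]⟩
  · simp [← List.length_pos_iff, List.length_stepsFrom]
  · rw [List.length_stepsFrom, ← h.length_eq_natCard]
    simp
  · rw [List.length_stepsFrom, List.map_range_prod_take_stepsFrom, ← List.cons_append,
      List.dropLast_concat]
    exact h.nodup.map (mul_right_injective a⁻¹)

theorem cayleyGraph_adj_mul {S : Set K} {g s : K} (hne : g ≠ g * s) (hs : s ∈ S ∨ s⁻¹ ∈ S) :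
    (cayleyGraph K S).Adj g (g * s) :=
  ⟨hne, by rwa [inv_mul_cancel_left]⟩

def cycleGraphHomOfSteps {S : Set K} {L : List K} (hS : ∀ s ∈ L, s ∈ S ∨ s⁻¹ ∈ S)
    (hnd : ((List.range L.length).map fun k => (L.take k).prod).Nodup) (hprod : L.prod = 1) :
    cycleGraph L.length →g cayleyGraph K S where
  toFun i := (L.take i).prod
  map_rel' {i j} hij := by
    have step : ∀ a b : Fin L.length, b.val = (a.val + 1) % L.length →
        (L.take a).prod ≠ (L.take b).prod →
        (cayleyGraph K S).Adj (L.take a).prod (L.take b).prod := by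
      intro a b hab hne
      rw [hab, List.prod_take_succ_mod hprod a.2] at hne ⊢
      exact cayleyGraph_adj_mul hne (hS _ (List.getElem_mem _))
    have hne := hnd.injective_fin_of_map_range.ne hij.ne
    rcases val_eq_succ_mod_of_cycleGraph_adj hij with h | h
    · exact step i j h hne
    · exact (step j i h hne.symm).symm

def pathGraphHomOfSteps {S : Set K} {L : List K} (hS : ∀ s ∈ L, s ∈ S ∨ s⁻¹ ∈ S)
    (hnd : ((List.range (L.length + 1)).map fun k => (L.take k).prod).Nodup) :
    pathGraph (L.length + 1) →g cayleyGraph K S where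
  toFun j := (L.take j).prod
  map_rel' {i j} hij := by
    have step : ∀ a b : Fin (L.length + 1), a.val + 1 = b.val →
        (L.take a).prod ≠ (L.take b).prod →
        (cayleyGraph K S).Adj (L.take a).prod (L.take b).prod := by
      intro a b hab hne
      rw [← hab, List.prod_take_succ _ _ (by omega)] at hne ⊢
      exact cayleyGraph_adj_mul hne (hS _ (List.getElem_mem _))
    have hne := hnd.injective_fin_of_map_range.ne hij.ne
    rcases pathGraph_adj.mp hij with h | h
    · exact step i j h hne
    · exact (step j i h hne.symm).symm

def cayleyGraphSubtypeHom (N : Subgroup G) (X : Set G) :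
    cayleyGraph N {x | (x : G) ∈ X} →g cayleyGraph G X where
  toFun := Subtype.val
  map_rel' {g h} hgh := ⟨Subtype.coe_ne_coe.mpr hgh.1, by simpa using hgh.2⟩

def boxProdMulHom {H₁ : SimpleGraph V} {H₂ : SimpleGraph W} {T S : Set G}
    (a : H₁ →g cayleyGraph G T) (b : H₂ →g cayleyGraph G S)
    (hconj : ∀ g t, t ∈ T ∨ t⁻¹ ∈ T → g⁻¹ * t * g ∈ S ∨ (g⁻¹ * t * g)⁻¹ ∈ S) :
    (H₁ □ H₂) →g cayleyGraph G S where
  toFun p := a p.1 * b p.2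
  map_rel' := by
    rintro ⟨u, v⟩ ⟨u', v'⟩ (⟨hu, rfl : v = v'⟩ | ⟨hv, rfl : u = u'⟩)
    · obtain ⟨hne, hmem⟩ := a.map_adj hu
      refine ⟨fun h => hne (mul_right_cancel h), ?_⟩
      have : (a u * b v)⁻¹ * (a u' * b v) = (b v)⁻¹ * ((a u)⁻¹ * a u') * b v := by group
      simpa only [this] using hconj (b v) _ hmem
    · obtain ⟨hne, hmem⟩ := b.map_adj hv
      refine ⟨fun h => hne (mul_left_cancel h), ?_⟩
      have : (a u * b v)⁻¹ * (a u * b v') = (b v)⁻¹ * b v' := by group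
      simpa only [this] using hmem

theorem conj_mem_of_centralizes_or_inverts {X S : Set G} (hXS : X ⊆ S) {g : G}
    (hg : ∀ x ∈ X, g⁻¹ * x * g = x ∨ g⁻¹ * x * g = x⁻¹) {t : G} (ht : t ∈ X ∨ t⁻¹ ∈ X) :
    g⁻¹ * t * g ∈ S ∨ (g⁻¹ * t * g)⁻¹ ∈ S := by
  rcases ht with ht | ht
  · rcases hg t ht with h | h <;> simp [h, hXS ht]
  · have : g⁻¹ * t * g = (g⁻¹ * t⁻¹ * g)⁻¹ := by group
    rcases hg _ ht with h | h <;> simp [this, h, hXS ht]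

theorem injective_mul_of_injective_mk {α β : Type*} {N : Subgroup G} [N.Normal] {a : α → G}
    {b : β → G} (ha : Function.Injective a) (haN : ∀ u, a u ∈ N)
    (hb : Function.Injective fun v => (b v : G ⧸ N)) :
    Function.Injective fun p : α × β => a p.1 * b p.2 := by
  rintro ⟨u, v⟩ ⟨u', v'⟩ h
  have hv : v = v' := hb (by
    simpa [QuotientGroup.mk_mul, (QuotientGroup.eq_one_iff _).2 (haN _)] using
      congrArg (QuotientGroup.mk (s := N)) h)
  subst hv
  exact Prod.ext (ha (mul_right_cancel h)) rfl

theorem exists_list_map_eq_of_mem_image {Q : Type} [Group Q] (f : G →* Q) {S : Set G} :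
    ∀ {LP : List Q}, (∀ q ∈ LP, q ∈ f '' S ∨ q⁻¹ ∈ f '' S) →
      ∃ LG : List G, LG.map f = LP ∧ ∀ s ∈ LG, s ∈ S ∨ s⁻¹ ∈ S
  | [], _ => ⟨[], rfl, by simp⟩
  | q :: LP, h => by
    obtain ⟨LG, rfl, hLG⟩ := exists_list_map_eq_of_mem_image f fun q' hq' => h q' (.tail _ hq')
    obtain ⟨s, hs, hsq⟩ : ∃ s, (s ∈ S ∨ s⁻¹ ∈ S) ∧ f s = q := by
      rcases h q (.head _) with ⟨s, hs, rfl⟩ | ⟨s, hs, hsq⟩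
      · exact ⟨s, .inl hs, rfl⟩
      · exact ⟨s⁻¹, .inr (by simpa using hs), by rw [map_inv, hsq, inv_inv]⟩
    exact ⟨s :: LG, by simp [hsq], List.forall_mem_cons.2 ⟨hs, hLG⟩⟩

end Cayley

theorem stmt19_general (G : Type) [Group G] [Fintype G] (S X : Set G) (hXS : X ⊆ S)
    (hnt : Subgroup.closure X ≠ ⊥)
    (hci : ∀ g : G, (∀ x ∈ Subgroup.closure X, g⁻¹ * x * g = x) ∨
      (∀ x ∈ Subgroup.closure X, g⁻¹ * x * g = x⁻¹))
    [hn : (Subgroup.closure X).Normal]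
    (LC : List ↥(Subgroup.closure X))
    (hC : IsHamCycle {x : ↥(Subgroup.closure X) | (x : G) ∈ X} LC)
    (LP : List (G ⧸ Subgroup.closure X))
    (hP : IsHamPath ((QuotientGroup.mk' (Subgroup.closure X)) '' S) LP) :
    (∃ φ : (cycleGraph LC.length □ pathGraph (LP.length + 1)) →g cayleyGraph G S,
      Function.Bijective φ) ∧
    ∃ L : List G, IsHamCycle S L := by
  obtain ⟨-, hLCS, hLCcard, hLCnd, hLCprod⟩ := hC
  obtain ⟨hLPS, hLPcard, hLPnd⟩ := hP
  obtain ⟨LG, rfl, hLGS⟩ := exists_list_map_eq_of_mem_image _ hLPS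
  have hmk : ∀ k, ((LG.map (QuotientGroup.mk' (Subgroup.closure X))).take k).prod =
      QuotientGroup.mk' _ (LG.take k).prod := fun k => by rw [← List.map_take, map_list_prod]
  simp only [List.length_map, hmk] at hLPcard hLPnd
  rw [List.length_map]
  have hLGnd : ((List.range (LG.length + 1)).map fun k => (LG.take k).prod).Nodup :=
    .of_map (QuotientGroup.mk' _) (by simpa only [List.map_map, Function.comp_def] using hLPnd)
  have hm : 2 ≤ LC.length := hLCcard ▸ (Subgroup.one_lt_card_iff_ne_bot _).mpr hnt
  let a := (cayleyGraphSubtypeHom _ X).comp (cycleGraphHomOfSteps hLCS hLCnd hLCprod)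
  let b := pathGraphHomOfSteps hLGS hLGnd
  let φ := boxProdMulHom a b fun g _ => conj_mem_of_centralizes_or_inverts hXS fun x hx =>
    (hci g).imp (· x (Subgroup.subset_closure hx)) (· x (Subgroup.subset_closure hx))
  have hφ : Function.Bijective φ := by
    rw [Fintype.bijective_iff_injective_and_card]
    refine ⟨injective_mul_of_injective_mk (N := Subgroup.closure X)
      (Subtype.val_injective.comp hLCnd.injective_fin_of_map_range) (fun _ => SetLike.coe_mem _)
      hLPnd.injective_fin_of_map_range, ?_⟩
    rw [Fintype.card_prod, Fintype.card_fin, Fintype.card_fin, hLCcard, hLPcard,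
      ← Nat.card_eq_fintype_card, (Subgroup.closure X).card_eq_card_quotient_mul_card_subgroup,
      mul_comm]
  obtain ⟨l, hl⟩ := (isHamCycleList_finRange_cycleGraph hm).exists_boxProd
    (List.nodup_finRange _) List.mem_finRange (isChain_finRange_pathGraph _)
  exact ⟨⟨φ, hφ⟩, exists_isHamCycle_of_isHamCycleList (hl.map φ hφ)⟩

/-- Let `G` be a finite group, `S` a generating set, `X ⊆ S` with `⟨X⟩` abelian and
nontrivial, and suppose every `g ∈ G` either centralizes or inverts every element of `⟨X⟩`
(so `⟨X⟩ ⊴ G`). If `Cay(⟨X⟩; X)` has a hamiltonian cycle (of length `m`) and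
`Cay(G/⟨X⟩; S)` has a hamiltonian path (with `n + 1` vertices), then the Cartesian product
of the cycle `Cₘ` and the path `Pₙ₊₁` embeds as a spanning subgraph of `Cay(G; S)`;
consequently `Cay(G; S)` has a hamiltonian cycle. -/
theorem stmt19 (G : Type) [Group G] [Fintype G] (S X : Set G) (hXS : X ⊆ S)
    (hSgen : Subgroup.closure S = ⊤)
    (habel : ∀ x ∈ Subgroup.closure X, ∀ y ∈ Subgroup.closure X, x * y = y * x)
    (hnt : Subgroup.closure X ≠ ⊥)
    (hci : ∀ g : G, (∀ x ∈ Subgroup.closure X, g⁻¹ * x * g = x) ∨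
      (∀ x ∈ Subgroup.closure X, g⁻¹ * x * g = x⁻¹))
    [hn : (Subgroup.closure X).Normal]
    (LC : List ↥(Subgroup.closure X))
    (hC : IsHamCycle {x : ↥(Subgroup.closure X) | (x : G) ∈ X} LC)
    (LP : List (G ⧸ Subgroup.closure X))
    (hP : IsHamPath ((QuotientGroup.mk' (Subgroup.closure X)) '' S) LP) :
    (∃ φ : (cycleGraph LC.length □ pathGraph (LP.length + 1)) →g cayleyGraph G S,
      Function.Bijective φ) ∧
    ∃ L : List G, IsHamCycle S L :=
  stmt19_general G S X hXS hnt hci (hn := hn) LC hC LP hP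
end
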